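/- arXiv:1701.04112 — 3 statements merged into one kernel-verified Lean document; each statement's English description precedes it below -/
import Mathlib

section
/- Let Ψ be a norm on a vector space E of real-valued functions on a set 𝒳, let F ⊂ E be convex, and let ‖·‖_{L2} denote the norm of L²(μ) for a probability measure μ on 𝒳 (with E ⊂ L²(μ)). Fix points x_1,…,x_m ∈ 𝒳 and reals y_1,…,y_m, and for f, h ∈ E set Q_{h,f} = (1/m)·Σ_{i=1}^m (h(x_i)−f(x_i))² and M_{h,f} = (2/m)·Σ_{i=1}^m (h(x_i)−f(x_i))·(f(x_i)−y_i). Let f* ∈ F and ρ, r, C, λ > 0, and assume: (a) for every h' ∈ F with Ψ(h'−f*) = ρ and ‖h'−f*‖_{L2} ≤ r, sup_{z∈Γ_{f*}(ρ)} z(h'−f*) ≥ 4ρ/5; (b) C·r²/(2ρ) ≤ λ ≤ 3C·r²/(4ρ). Let h ∈ F satisfy either Ψ(h−f*) = ρ, or Ψ(h−f*) < ρ and ‖h−f*‖_{L2} ≥ r, and assume: (c) M_{h,f*} ≥ −(C/4)·max{‖h−f*‖_{L2}², r²}; and (d) if ‖h−f*‖_{L2} ≥ r, then Q_{h,f*}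 ≥ C·‖h−f*‖_{L2}². Then Q_{h,f*} + M_{h,f*} + λ·(Ψ(h)−Ψ(f*)) > 0. Moreover, if f = f* + α·(h−f*) belongs to F for some α > 1, then also Q_{f,f*} + M_{f,f*} + λ·(Ψ(f)−Ψ(f*)) > 0. -/
open MeasureTheory

noncomputable section

/-- The `L²(μ)` norm of a function. -/
def L2n {𝒳 : Type*} [MeasurableSpace 𝒳] (μ : Measure 𝒳) (g : 𝒳 → ℝ) : ℝ :=
  (∫ x, g x ^ 2 ∂μ) ^ (1 / 2 : ℝ)

/-- The empirical quadratic component `Q_{h,f} = (1/m) Σ_i (h(x_i) - f(x_i))²`. -/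
def Qemp {𝒳 : Type*} (m : ℕ) (x : Fin m → 𝒳) (h f : 𝒳 → ℝ) : ℝ :=
  (m : ℝ)⁻¹ * ∑ i, (h (x i) - f (x i)) ^ 2

/-- The empirical multiplier component
`M_{h,f} = (2/m) Σ_i (h(x_i) - f(x_i)) (f(x_i) - y_i)`. -/
def Memp {𝒳 : Type*} (m : ℕ) (x : Fin m → 𝒳) (y : Fin m → ℝ) (h f : 𝒳 → ℝ) : ℝ :=
  2 * (m : ℝ)⁻¹ * ∑ i, (h (x i) - f (x i)) * (f (x i) - y i)

/-- The set `Γ_f(ρ)` of linear functionals in the dual unit ball of `Ψ` which are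
norming for some `v` with `Ψ(v - f) ≤ ρ/20`. -/
def Gamma {𝒳 : Type*} (Ψ : (𝒳 → ℝ) → ℝ) (f : 𝒳 → ℝ) (ρ : ℝ) :
    Set ((𝒳 → ℝ) →ₗ[ℝ] ℝ) :=
  {z | (∀ x, |z x| ≤ Ψ x) ∧ ∃ v, Ψ (v - f) ≤ ρ / 20 ∧ z v = Ψ v}

/-- Auxiliary: the norming-functional argument. If the supremum over `Γ_{f*}(ρ)` of
`z (h - f*)` is at least `4ρ/5`, then `Ψ h - Ψ f* ≥ 7ρ/10`. -/
lemma norming_gain {𝒳 : Type*} (Ψ : (𝒳 → ℝ) → ℝ)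
    (hΨadd : ∀ f g : 𝒳 → ℝ, Ψ (f + g) ≤ Ψ f + Ψ g)
    (hΨneg : ∀ g : 𝒳 → ℝ, Ψ (-g) = Ψ g)
    (fstar h : 𝒳 → ℝ) (ρ : ℝ) (hρ : 0 < ρ)
    (hsup : 4 * ρ / 5 ≤ ⨆ z ∈ Gamma Ψ fstar ρ, z (h - fstar)) :
    7 * ρ / 10 ≤ Ψ h - Ψ fstar := by
  have hrev : ∀ a b : 𝒳 → ℝ, Ψ a - Ψ b ≤ Ψ (a - b) := by
    intro a b
    have h1 : Ψ (b + (a - b)) ≤ Ψ b + Ψ (a - b) := hΨadd b (a - b)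
    have h2 : b + (a - b) = a := by ring
    rw [h2] at h1; linarith
  have key : ∀ z ∈ Gamma Ψ fstar ρ, (z (h - fstar) : ℝ) ≤ Ψ h - Ψ fstar + ρ / 10 := by
    rintro z ⟨hz1, v, hv1, hv2⟩
    have e1 : (z (h - fstar) : ℝ) = z h - z fstar := map_sub z h fstar
    have e2 : (z fstar : ℝ) = z v - z (v - fstar) := by rw [map_sub]; ring
    have h1' : (z h : ℝ) ≤ Ψ h := le_trans (le_abs_self _) (hz1 h)
    have h2' : (z (v - fstar) : ℝ) ≤ ρ / 20 :=
      le_trans (le_trans (le_abs_self _) (hz1 _)) hv1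
    have h3' : Ψ fstar - ρ / 20 ≤ Ψ v := by
      have hx := hrev fstar v
      have e : Ψ (fstar - v) = Ψ (v - fstar) := by
        rw [show fstar - v = -(v - fstar) by ring, hΨneg]
      rw [e] at hx; linarith
    rw [e1, e2, hv2]
    linarith
  set B : ℝ := Ψ h - Ψ fstar + ρ / 10 with hBdef
  have hS : (⨆ z ∈ Gamma Ψ fstar ρ, (z (h - fstar) : ℝ)) ≤ max B 0 := by
    refine Real.iSup_le (fun z => Real.iSup_le (fun hz => ?_) (le_max_right _ _))
      (le_max_right _ _)
    exact le_max_of_le_left (key z hz)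
  have hB : 4 * ρ / 5 ≤ B := by
    rcases le_total B 0 with hB0 | hB0
    · have hmx : max B 0 = 0 := max_eq_right hB0
      rw [hmx] at hS
      linarith [le_trans hsup hS]
    · have hmx : max B 0 = B := max_eq_left hB0
      rw [hmx] at hS
      exact le_trans hsup hS
  rw [hBdef] at hB
  linarith

set_option maxHeartbeats 1000000 in
/-- the deterministic lemma combining the loss and the regularizer.
Under the dual-norming condition (a), the choice of `λ` in (b), and the block
conditions (c), (d), the regularized empirical excess loss of `h` (and of any point
`f = f* + α(h - f*)`, `α > 1`, of `F`) against `f*` is positive. -/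
theorem statement4 {𝒳 : Type*} [MeasurableSpace 𝒳] (μ : Measure 𝒳)
    [IsProbabilityMeasure μ]
    (F : Set (𝒳 → ℝ)) (hF : Convex ℝ F)
    (Ψ : (𝒳 → ℝ) → ℝ)
    (hΨadd : ∀ f g : 𝒳 → ℝ, Ψ (f + g) ≤ Ψ f + Ψ g)
    (hΨsmul : ∀ (a : ℝ) (f : 𝒳 → ℝ), Ψ (a • f) = |a| * Ψ f)
    (hΨdef : ∀ f : 𝒳 → ℝ, Ψ f = 0 → f = 0)
    (m : ℕ) (hm : 0 < m) (x : Fin m → 𝒳) (y : Fin m → ℝ)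
    (fstar : 𝒳 → ℝ) (hfstar : fstar ∈ F)
    (ρ r C lam : ℝ) (hρ : 0 < ρ) (hr : 0 < r) (hC : 0 < C) (hlam : 0 < lam)
    -- (a) the norming-functional condition `Δ(ρ, r) ≥ 4ρ/5`
    (ha : ∀ h' ∈ F, Ψ (h' - fstar) = ρ → L2n μ (h' - fstar) ≤ r →
      4 * ρ / 5 ≤ ⨆ z ∈ Gamma Ψ fstar ρ, z (h' - fstar))
    -- (b) the choice of the regularization parameter
    (hb1 : C * r ^ 2 / (2 * ρ) ≤ lam) (hb2 : lam ≤ 3 * C * r ^ 2 / (4 * ρ))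
    (h : 𝒳 → ℝ) (hhF : h ∈ F)
    (hcase : Ψ (h - fstar) = ρ ∨ (Ψ (h - fstar) < ρ ∧ r ≤ L2n μ (h - fstar)))
    -- (c) lower bound on the multiplier component
    (hc : -(C / 4) * max (L2n μ (h - fstar) ^ 2) (r ^ 2) ≤ Memp m x y h fstar)
    -- (d) lower bound on the quadratic component
    (hd : r ≤ L2n μ (h - fstar) → C * L2n μ (h - fstar) ^ 2 ≤ Qemp m x h fstar) :
    0 < Qemp m x h fstar + Memp m x y h fstar + lam * (Ψ h - Ψ fstar) ∧
      ∀ (α : ℝ) (f : 𝒳 → ℝ), 1 < α → f = fstar + α • (h - fstar) → f ∈ F →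
        0 < Qemp m x f fstar + Memp m x y f fstar + lam * (Ψ f - Ψ fstar) := by
  have hΨneg : ∀ g : 𝒳 → ℝ, Ψ (-g) = Ψ g := by
    intro g
    have := hΨsmul (-1) g
    simpa using this
  have hrev : ∀ a b : 𝒳 → ℝ, Ψ a - Ψ b ≤ Ψ (a - b) := by
    intro a b
    have h1 : Ψ (b + (a - b)) ≤ Ψ b + Ψ (a - b) := hΨadd b (a - b)
    have h2 : b + (a - b) = a := by ring
    rw [h2] at h1; linarith
  set L : ℝ := L2n μ (h - fstar) with hLdef
  have hL0 : 0 ≤ L := Real.rpow_nonneg (integral_nonneg fun t => sq_nonneg _) _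
  have hQ0 : 0 ≤ Qemp m x h fstar := by
    apply mul_nonneg (by positivity)
    exact Finset.sum_nonneg fun i _ => sq_nonneg _
  have hΨle : Ψ (h - fstar) ≤ ρ := by
    rcases hcase with h1 | ⟨h1, _⟩
    · exact le_of_eq h1
    · exact le_of_lt h1
  have hΔlb : -(Ψ (h - fstar)) ≤ Ψ h - Ψ fstar := by
    have hx := hrev fstar h
    have e : Ψ (fstar - h) = Ψ (h - fstar) := by
      rw [show fstar - h = -(h - fstar) by ring, hΨneg]
    rw [e] at hx; linarith
  have hlamρ : lam * ρ ≤ 3 * C * r ^ 2 / 4 := by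
    rw [le_div_iff₀ (by positivity : (0:ℝ) < 4 * ρ)] at hb2
    nlinarith
  -- main inequality for h
  have main : 0 < Qemp m x h fstar + Memp m x y h fstar + lam * (Ψ h - Ψ fstar) := by
    by_cases hLr : r ≤ L
    · -- quadratic-dominated case
      have hQ := hd hLr
      have hr2L2 : r ^ 2 ≤ L ^ 2 := pow_le_pow_left₀ hr.le hLr 2
      have hmax : max (L ^ 2) (r ^ 2) = L ^ 2 := max_eq_left hr2L2
      rw [hmax] at hc
      have hlamΔ : -(lam * Ψ (h - fstar)) ≤ lam * (Ψ h - Ψ fstar) := by nlinarith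
      rcases hcase with h1 | ⟨h1, _⟩
      · rcases eq_or_lt_of_le hLr with hrL | hrL
        · -- L = r : use the norming-functional argument
          have hΔ : 7 * ρ / 10 ≤ Ψ h - Ψ fstar :=
            norming_gain Ψ hΨadd hΨneg fstar h ρ hρ
              (ha h hhF h1 (le_of_eq hrL.symm))
          have hlamΔ2 : C * r ^ 2 / (2 * ρ) * (7 * ρ / 10) ≤ lam * (Ψ h - Ψ fstar) :=
            mul_le_mul hb1 hΔ (by positivity) hlam.le
          have e : C * r ^ 2 / (2 * ρ) * (7 * ρ / 10) = 7 * C * r ^ 2 / 20 := by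
            field_simp; ring
          rw [e] at hlamΔ2
          nlinarith
        · -- r < L : strict quadratic gain
          rw [h1] at hlamΔ
          nlinarith [pow_lt_pow_left₀ hrL hr.le (by norm_num : (2:ℕ) ≠ 0)]
      · -- Ψ(h-f*) < ρ
        have hstrict : -(lam * ρ) < lam * (Ψ h - Ψ fstar) := by
          have hx : lam * Ψ (h - fstar) < lam * ρ := (mul_lt_mul_iff_right₀ hlam).mpr h1
          linarith
        nlinarith
    · -- L < r : norming-functional case (so Ψ(h-f*) = ρ)
      push_neg at hLr
      rcases hcase with h1 | ⟨_, h1⟩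
      · have hL2r2 : L ^ 2 ≤ r ^ 2 := pow_le_pow_left₀ hL0 hLr.le 2
        have hmax : max (L ^ 2) (r ^ 2) = r ^ 2 := max_eq_right hL2r2
        rw [hmax] at hc
        have hΔ : 7 * ρ / 10 ≤ Ψ h - Ψ fstar :=
          norming_gain Ψ hΨadd hΨneg fstar h ρ hρ (ha h hhF h1 hLr.le)
        have hlamΔ2 : C * r ^ 2 / (2 * ρ) * (7 * ρ / 10) ≤ lam * (Ψ h - Ψ fstar) :=
          mul_le_mul hb1 hΔ (by positivity) hlam.le
        have e : C * r ^ 2 / (2 * ρ) * (7 * ρ / 10) = 7 * C * r ^ 2 / 20 := by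
          field_simp; ring
        rw [e] at hlamΔ2
        nlinarith
      · linarith
  refine ⟨main, ?_⟩
  -- second part: scaling along the ray
  rintro α f hα rfl hfF
  have hα0 : (0:ℝ) < α := by linarith
  have hpt : ∀ i : Fin m, (fstar + α • (h - fstar)) (x i) - fstar (x i)
      = α * (h (x i) - fstar (x i)) := by
    intro i
    simp only [Pi.add_apply, Pi.smul_apply, Pi.sub_apply, smul_eq_mul]
    ring
  have hQf : Qemp m x (fstar + α • (h - fstar)) fstar = α ^ 2 * Qemp m x h fstar := by
    unfold Qemp
    rw [Finset.sum_congr rfl fun i _ => by rw [hpt i]]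
    rw [show ∑ i : Fin m, (α * (h (x i) - fstar (x i))) ^ 2
        = α ^ 2 * ∑ i : Fin m, (h (x i) - fstar (x i)) ^ 2 by
      rw [Finset.mul_sum]; exact Finset.sum_congr rfl fun i _ => by ring]
    ring
  have hMf : Memp m x y (fstar + α • (h - fstar)) fstar = α * Memp m x y h fstar := by
    unfold Memp
    rw [Finset.sum_congr rfl fun i _ => by rw [hpt i]]
    rw [show ∑ i : Fin m, α * (h (x i) - fstar (x i)) * (fstar (x i) - y i)
        = α * ∑ i : Fin m, (h (x i) - fstar (x i)) * (fstar (x i) - y i) by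
      rw [Finset.mul_sum]; exact Finset.sum_congr rfl fun i _ => by ring]
    ring
  have hheq : h = α⁻¹ • (fstar + α • (h - fstar)) + (1 - α⁻¹) • fstar := by
    rw [smul_add, smul_smul, inv_mul_cancel₀ (ne_of_gt hα0), one_smul]
    rw [sub_smul, one_smul]
    abel
  have hconv : α * (Ψ h - Ψ fstar) ≤ Ψ (fstar + α • (h - fstar)) - Ψ fstar := by
    have h1 : Ψ h ≤ Ψ (α⁻¹ • (fstar + α • (h - fstar))) + Ψ ((1 - α⁻¹) • fstar) := by
      conv_lhs => rw [hheq]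
      exact hΨadd _ _
    rw [hΨsmul, hΨsmul] at h1
    have e1 : |α⁻¹| = α⁻¹ := abs_of_pos (by positivity)
    have e2 : |1 - α⁻¹| = 1 - α⁻¹ := by
      apply abs_of_nonneg
      have h4 : α⁻¹ * α = 1 := inv_mul_cancel₀ (ne_of_gt hα0)
      nlinarith [inv_pos.mpr hα0]
    rw [e1, e2] at h1
    have h2 : α * Ψ h ≤ Ψ (fstar + α • (h - fstar)) + (α - 1) * Ψ fstar := by
      have h3 := mul_le_mul_of_nonneg_left h1 hα0.le
      have eα : α * (α⁻¹ * Ψ (fstar + α • (h - fstar)) + (1 - α⁻¹) * Ψ fstar)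
          = Ψ (fstar + α • (h - fstar)) + (α - 1) * Ψ fstar := by
        field_simp
      linarith [eα ▸ h3]
    linarith
  rw [hQf, hMf]
  nlinarith [mul_pos hα0 main,
    mul_nonneg (mul_nonneg hα0.le (by linarith : (0:ℝ) ≤ α - 1)) hQ0]

end
end

section
/- Let t0 ∈ ℝ^d be supported on a set of coordinates I ⊆ {1,…,d} with |I| ≤ s, and let t ∈ ℝ^d satisfy ‖t−t0‖₁ = ρ and ‖t−t0‖₂ ≤ r. Then there exists z ∈ ℝ^d with ‖z‖_∞ ≤ 1 that is norming simultaneously for t0 and for P_{I^c}t, i.e., ⟨z, t0⟩ = ‖t0‖₁ and ⟨z, P_{I^c}t⟩ = ‖P_{I^c}t‖₁, and which satisfies ⟨z, t−t0⟩ ≥ ρ − 2√s·r. In particular, if 10√s·r ≤ ρ, then ⟨z, t−t0⟩ ≥ 4ρ/5. -/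
noncomputable section

/-- Inner product on `ℝ^d`. -/
def dotp {d : ℕ} (t x : Fin d → ℝ) : ℝ := ∑ i, t i * x i

/-- `ℓ₁` norm on `ℝ^d`. -/
def norm1 {d : ℕ} (t : Fin d → ℝ) : ℝ := ∑ i, |t i|

/-- Euclidean (`ℓ₂`) norm on `ℝ^d`. -/
def eNorm2 {d : ℕ} (t : Fin d → ℝ) : ℝ := Real.sqrt (∑ i, t i ^ 2)

lemma sign_mul_eq_abs (x : ℝ) : Real.sign x * x = |x| := by
  rcases lt_trichotomy x 0 with h | h | h
  · rw [Real.sign_of_neg h, abs_of_neg h]; ring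
  · simp [h]
  · rw [Real.sign_of_pos h, abs_of_pos h]; ring

lemma abs_sign_le_one (x : ℝ) : |Real.sign x| ≤ 1 := by
  rcases Real.sign_apply_eq x with h | h | h <;> simp [h]

/-- if `t0` is supported on `I` with `|I| ≤ s`, and `‖t - t0‖₁ = ρ`,
`‖t - t0‖₂ ≤ r`, then there is `z` with `‖z‖_∞ ≤ 1`, norming for both `t0` and
`P_{Iᶜ} t`, such that `⟨z, t - t0⟩ ≥ ρ - 2√s·r`; in particular if `10√s·r ≤ ρ`
then `⟨z, t - t0⟩ ≥ 4ρ/5`. -/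
theorem statement9 {d : ℕ} (s : ℕ) (I : Finset (Fin d)) (t0 t : Fin d → ℝ) (ρ r : ℝ)
    (hI : I.card ≤ s) (hsupp : ∀ i ∉ I, t0 i = 0)
    (h1 : norm1 (t - t0) = ρ) (h2 : eNorm2 (t - t0) ≤ r) :
    ∃ z : Fin d → ℝ, (∀ i, |z i| ≤ 1) ∧
      dotp z t0 = norm1 t0 ∧
      dotp z (fun i => if i ∈ I then 0 else t i) =
        norm1 (fun i => if i ∈ I then 0 else t i) ∧
      ρ - 2 * Real.sqrt s * r ≤ dotp z (t - t0) ∧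
      (10 * Real.sqrt s * r ≤ ρ → 4 * ρ / 5 ≤ dotp z (t - t0)) := by
  set u : Fin d → ℝ := t - t0 with hu
  refine ⟨fun i => if i ∈ I then Real.sign (t0 i) else Real.sign (t i), ?_, ?_, ?_, ?_, ?_⟩
  · intro i; by_cases h : i ∈ I <;> simp [h, abs_sign_le_one]
  · unfold dotp norm1
    refine Finset.sum_congr rfl fun i _ => ?_
    by_cases h : i ∈ I
    · simp [h, sign_mul_eq_abs]
    · simp [h, hsupp i h]
  · unfold dotp norm1
    refine Finset.sum_congr rfl fun i _ => ?_
    by_cases h : i ∈ I <;> simp [h, sign_mul_eq_abs]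
  · -- main inequality
    have hr : 0 ≤ r := le_trans (Real.sqrt_nonneg _) h2
    have hcs : ∑ i ∈ I, |u i| ≤ Real.sqrt s * r := by
      have h1' : (∑ i ∈ I, |u i|) ^ 2 ≤ I.card * ∑ i ∈ I, |u i| ^ 2 :=
        sq_sum_le_card_mul_sum_sq
      have h2' : ∑ i ∈ I, |u i| ^ 2 ≤ ∑ i, u i ^ 2 := by
        simp only [sq_abs]
        exact Finset.sum_le_sum_of_subset_of_nonneg (Finset.subset_univ _)
          (fun i _ _ => sq_nonneg _)
      have h3' : (∑ i ∈ I, |u i|) ^ 2 ≤ (s : ℝ) * ∑ i, u i ^ 2 := by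
        calc (∑ i ∈ I, |u i|) ^ 2 ≤ (I.card : ℝ) * ∑ i ∈ I, |u i| ^ 2 := h1'
          _ ≤ (s : ℝ) * ∑ i, u i ^ 2 := by
            apply mul_le_mul (by exact_mod_cast hI) h2'
              (Finset.sum_nonneg fun i _ => sq_nonneg _) (Nat.cast_nonneg _)
      have h4' : ∑ i ∈ I, |u i| ≤ Real.sqrt ((s : ℝ) * ∑ i, u i ^ 2) := by
        rw [← Real.sqrt_sq (Finset.sum_nonneg fun i _ => abs_nonneg _)]
        exact Real.sqrt_le_sqrt h3'
      calc ∑ i ∈ I, |u i| ≤ Real.sqrt ((s : ℝ) * ∑ i, u i ^ 2) := h4'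
        _ = Real.sqrt s * Real.sqrt (∑ i, u i ^ 2) := Real.sqrt_mul (Nat.cast_nonneg _) _
        _ ≤ Real.sqrt s * r := mul_le_mul_of_nonneg_left h2 (Real.sqrt_nonneg _)
    have hsplit : ρ = (∑ i ∈ I, |u i|) + ∑ i ∈ Iᶜ, |u i| := by
      rw [← h1]; unfold norm1
      rw [← Finset.sum_add_sum_compl I]
    have hdot : (∑ i ∈ Iᶜ, |u i|) - ∑ i ∈ I, |u i| ≤ dotp
        (fun i => if i ∈ I then Real.sign (t0 i) else Real.sign (t i)) (t - t0) := by
      unfold dotp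
      rw [← Finset.sum_add_sum_compl I (f := fun i =>
        (if i ∈ I then Real.sign (t0 i) else Real.sign (t i)) * (t - t0) i),
        sub_eq_neg_add, ← Finset.sum_neg_distrib]
      apply add_le_add
      · apply Finset.sum_le_sum
        intro i hi
        simp only [hi, if_pos]
        calc -|u i| ≤ -(|Real.sign (t0 i)| * |u i|) := by
              nlinarith [abs_sign_le_one (t0 i), abs_nonneg (u i)]
          _ = -|Real.sign (t0 i) * u i| := by rw [abs_mul]
          _ ≤ Real.sign (t0 i) * u i := neg_abs_le _
      · apply le_of_eq
        refine Finset.sum_congr rfl fun i hi => ?_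
        rw [Finset.mem_compl] at hi
        simp only [hi, if_neg, not_false_iff]
        have h0 : t0 i = 0 := hsupp i hi
        have hui : u i = t i := by simp [hu, h0]
        rw [hui, Pi.sub_apply, h0, sub_zero, sign_mul_eq_abs]
    have key : ρ - 2 * Real.sqrt s * r ≤ dotp
        (fun i => if i ∈ I then Real.sign (t0 i) else Real.sign (t i)) (t - t0) := by
      have := hdot
      nlinarith [hcs, hsplit]
    exact key
  · intro h10
    have hr : 0 ≤ r := le_trans (Real.sqrt_nonneg _) h2
    have hcs : ∑ i ∈ I, |u i| ≤ Real.sqrt s * r := by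
      have h1' : (∑ i ∈ I, |u i|) ^ 2 ≤ I.card * ∑ i ∈ I, |u i| ^ 2 :=
        sq_sum_le_card_mul_sum_sq
      have h2' : ∑ i ∈ I, |u i| ^ 2 ≤ ∑ i, u i ^ 2 := by
        simp only [sq_abs]
        exact Finset.sum_le_sum_of_subset_of_nonneg (Finset.subset_univ _)
          (fun i _ _ => sq_nonneg _)
      have h3' : (∑ i ∈ I, |u i|) ^ 2 ≤ (s : ℝ) * ∑ i, u i ^ 2 := by
        calc (∑ i ∈ I, |u i|) ^ 2 ≤ (I.card : ℝ) * ∑ i ∈ I, |u i| ^ 2 := h1'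
          _ ≤ (s : ℝ) * ∑ i, u i ^ 2 := by
            apply mul_le_mul (by exact_mod_cast hI) h2'
              (Finset.sum_nonneg fun i _ => sq_nonneg _) (Nat.cast_nonneg _)
      have h4' : ∑ i ∈ I, |u i| ≤ Real.sqrt ((s : ℝ) * ∑ i, u i ^ 2) := by
        rw [← Real.sqrt_sq (Finset.sum_nonneg fun i _ => abs_nonneg _)]
        exact Real.sqrt_le_sqrt h3'
      calc ∑ i ∈ I, |u i| ≤ Real.sqrt ((s : ℝ) * ∑ i, u i ^ 2) := h4'
        _ = Real.sqrt s * Real.sqrt (∑ i, u i ^ 2) := Real.sqrt_mul (Nat.cast_nonneg _) _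
        _ ≤ Real.sqrt s * r := mul_le_mul_of_nonneg_left h2 (Real.sqrt_nonneg _)
    have hsplit : ρ = (∑ i ∈ I, |u i|) + ∑ i ∈ Iᶜ, |u i| := by
      rw [← h1]; unfold norm1
      rw [← Finset.sum_add_sum_compl I]
    have hdot : (∑ i ∈ Iᶜ, |u i|) - ∑ i ∈ I, |u i| ≤ dotp
        (fun i => if i ∈ I then Real.sign (t0 i) else Real.sign (t i)) (t - t0) := by
      unfold dotp
      rw [← Finset.sum_add_sum_compl I (f := fun i =>
        (if i ∈ I then Real.sign (t0 i) else Real.sign (t i)) * (t - t0) i),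
        sub_eq_neg_add, ← Finset.sum_neg_distrib]
      apply add_le_add
      · apply Finset.sum_le_sum
        intro i hi
        simp only [hi, if_pos]
        calc -|u i| ≤ -(|Real.sign (t0 i)| * |u i|) := by
              nlinarith [abs_sign_le_one (t0 i), abs_nonneg (u i)]
          _ = -|Real.sign (t0 i) * u i| := by rw [abs_mul]
          _ ≤ Real.sign (t0 i) * u i := neg_abs_le _
      · apply le_of_eq
        refine Finset.sum_congr rfl fun i hi => ?_
        rw [Finset.mem_compl] at hi
        simp only [hi, if_neg, not_false_iff]
        have h0 : t0 i = 0 := hsupp i hi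
        have hui : u i = t i := by simp [hu, h0]
        rw [hui, Pi.sub_apply, h0, sub_zero, sign_mul_eq_abs]
    nlinarith [hdot, hcs, hsplit]

end
end

section
/- There is an absolute constant C > 0 such that for all integers 1 ≤ k ≤ d, if G = (g_1,…,g_d) is a vector of independent standard Gaussian random variables, then E sup{⟨G,t⟩ : t ∈ ℝ^d, ‖t‖₁ ≤ √k, ‖t‖₂ ≤ 1} ≤ C·√(k·log(ed/k)). Consequently, for all ρ, r > 0 with r ≤ ρ ≤ √d·r, E sup{⟨G,t⟩ : t ∈ ℝ^d, ‖t‖₁ ≤ ρ, ‖t‖₂ ≤ r} ≤ C·ρ·√(log(e·d·r²/ρ²)). -/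
open MeasureTheory

noncomputable section

/-- Gaussian mean width `ℓ*(T) = E sup_{t ∈ T} ⟨G, t⟩` of a set `T ⊆ ℝ^d`,
where `G` is a standard Gaussian vector. -/
def gaussWidth (d : ℕ) (T : Set (Fin d → ℝ)) : ℝ :=
  ∫ g, (⨆ t ∈ T, dotp g t)
    ∂(Measure.pi fun _ : Fin d => ProbabilityTheory.gaussianReal 0 1)

/-!
Cut each coordinate of `g` at a level `β ≥ 1`: for `‖t‖₁ ≤ ρ` and `‖t‖₂ ≤ r`, Cauchy–Schwarz on
the excess gives `⟨g, t⟩ ≤ β ρ + r (∑ (|gᵢ| - β)₊²)^{1/2}`. By Jensen the expected square root is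
at most `√(d 𝔼 (|g₁| - β)₊²)`, and `(|x| - β)₊² ≤ 16 e^{-β²/4} e^{x²/4}` with `𝔼 e^{g₁²/4} = √2`,
so `ℓ*(ρ B₁ ∩ r B₂) ≤ β ρ + r √(24 d e^{-β²/4})`. The choice `β = 2 √(log (e d r² / ρ²))` turns
the second term into `O(ρ)`; the first claim is the case `ρ = √k`, `r = 1`.
-/
open ProbabilityTheory Real

namespace GaussWidth

section Sqrt

variable {α : Type*} [MeasurableSpace α] {μ : Measure α} {f : α → ℝ}

lemma integrable_sqrt_of_nonneg [IsFiniteMeasure μ] (hf₀ : ∀ x, 0 ≤ f x) (hf : Integrable f μ) :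
    Integrable (fun x => √(f x)) μ := by
  refine ((integrable_const 1).add hf).mono' (continuous_sqrt.comp_aestronglyMeasurable hf.1)
    (ae_of_all _ fun x => ?_)
  rw [norm_of_nonneg (sqrt_nonneg _), Pi.add_apply, sqrt_le_left (by linarith [hf₀ x])]
  nlinarith [hf₀ x]

lemma integral_sqrt_le_sqrt_integral [IsProbabilityMeasure μ] (hf₀ : ∀ x, 0 ≤ f x)
    (hf : Integrable f μ) :
    ∫ x, √(f x) ∂μ ≤ √(∫ x, f x ∂μ) :=
  strictConcaveOn_sqrt.concaveOn.le_map_integral continuous_sqrt.continuousOn isClosed_Ici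
    (ae_of_all _ hf₀) hf (integrable_sqrt_of_nonneg hf₀ hf)

end Sqrt

def excessSq (β x : ℝ) : ℝ := max (|x| - β) 0 ^ 2

lemma excessSq_nonneg (β x : ℝ) : 0 ≤ excessSq β x := sq_nonneg _

lemma measurable_excessSq (β : ℝ) : Measurable (excessSq β) := by
  unfold excessSq; fun_prop

lemma excessSq_le_exp {β : ℝ} (hβ : 1 ≤ β) (x : ℝ) :
    excessSq β x ≤ 16 * exp (-β ^ 2 / 4) * exp (x ^ 2 / 4) := by
  rcases le_or_gt |x| β with hx | hx
  · rw [excessSq, max_eq_right (by linarith), zero_pow two_ne_zero]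
    positivity
  rw [excessSq, max_eq_left (by linarith), mul_assoc, ← exp_add]
  set u := |x| - β with hu
  have hx2 : x ^ 2 = (u + β) ^ 2 := by rw [hu, sub_add_cancel, sq_abs]
  have hlin : u / 4 ≤ exp (u / 4) := by linarith [add_one_le_exp (u / 4)]
  calc u ^ 2 = 16 * ((u / 4) * (u / 4)) := by ring
    _ ≤ 16 * (exp (u / 4) * exp (u / 4)) := by gcongr
    _ = 16 * exp (u / 2) := by rw [← exp_add]; congr 2; ring
    _ ≤ 16 * exp (-β ^ 2 / 4 + x ^ 2 / 4) := by
      gcongr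
      nlinarith

lemma gaussianPDFReal_mul_exp_mul_sq (s x : ℝ) :
    gaussianPDFReal 0 1 x * exp (s * x ^ 2) = (√(2 * π))⁻¹ * exp (-(1 / 2 - s) * x ^ 2) := by
  rw [gaussianPDFReal, mul_assoc, ← exp_add]
  congr 2
  · simp
  · push_cast; ring

lemma integrable_exp_mul_sq_gaussianReal {s : ℝ} (hs : s < 1 / 2) :
    Integrable (fun x => exp (s * x ^ 2)) (gaussianReal 0 1) := by
  rw [gaussianReal_of_var_ne_zero 0 one_ne_zero, integrable_withDensity_iff_integrable_smul'
    (measurable_gaussianPDF 0 1) (ae_of_all _ fun _ => gaussianPDF_lt_top)]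
  simp only [toReal_gaussianPDF, smul_eq_mul, gaussianPDFReal_mul_exp_mul_sq]
  exact (integrable_exp_neg_mul_sq (by linarith)).const_mul _

lemma integral_exp_mul_sq_gaussianReal {s : ℝ} (hs : s < 1 / 2) :
    ∫ x, exp (s * x ^ 2) ∂(gaussianReal 0 1) = (√(1 - 2 * s))⁻¹ := by
  rw [integral_gaussianReal_eq_integral_smul one_ne_zero]
  simp only [smul_eq_mul, gaussianPDFReal_mul_exp_mul_sq]
  rw [integral_const_mul, integral_gaussian,
    show π / (1 / 2 - s) = 2 * π / (1 - 2 * s) by field_simp,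
    sqrt_div' _ (by linarith), div_eq_mul_inv, ← mul_assoc,
    inv_mul_cancel₀ (by positivity), one_mul]

lemma integrable_excessSq_gaussianReal {β : ℝ} (hβ : 1 ≤ β) :
    Integrable (excessSq β) (gaussianReal 0 1) := by
  refine ((integrable_exp_mul_sq_gaussianReal (s := 1 / 4) (by norm_num)).const_mul
    (16 * exp (-β ^ 2 / 4))).mono' (measurable_excessSq β).aestronglyMeasurable
    (ae_of_all _ fun x => ?_)
  rw [norm_of_nonneg (excessSq_nonneg β x), show 1 / 4 * x ^ 2 = x ^ 2 / 4 by ring]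
  exact excessSq_le_exp hβ x

lemma integral_excessSq_gaussianReal_le {β : ℝ} (hβ : 1 ≤ β) :
    ∫ x, excessSq β x ∂(gaussianReal 0 1) ≤ 24 * exp (-β ^ 2 / 4) := by
  have hexp := integrable_exp_mul_sq_gaussianReal (s := 1 / 4) (by norm_num)
  have hsqrt : (√(1 - 2 * (1 / 4) : ℝ))⁻¹ ≤ 3 / 2 := by
    rw [inv_le_comm₀ (by positivity) (by norm_num), le_sqrt (by norm_num) (by norm_num)]
    norm_num
  calc ∫ x, excessSq β x ∂(gaussianReal 0 1)
      ≤ ∫ x, 16 * exp (-β ^ 2 / 4) * exp (1 / 4 * x ^ 2) ∂(gaussianReal 0 1) := by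
        refine integral_mono (integrable_excessSq_gaussianReal hβ) (hexp.const_mul _) fun x => ?_
        rw [show 1 / 4 * x ^ 2 = x ^ 2 / 4 by ring]
        exact excessSq_le_exp hβ x
    _ = 16 * exp (-β ^ 2 / 4) * (√(1 - 2 * (1 / 4) : ℝ))⁻¹ := by
        rw [integral_const_mul, integral_exp_mul_sq_gaussianReal (by norm_num)]
    _ ≤ 24 * exp (-β ^ 2 / 4) := by nlinarith [exp_pos (-β ^ 2 / 4)]

lemma dotp_le_excessSq {d : ℕ} {β ρ r : ℝ} (hβ : 0 ≤ β) (g : Fin d → ℝ) {t : Fin d → ℝ}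
    (h₁ : norm1 t ≤ ρ) (h₂ : eNorm2 t ≤ r) :
    dotp g t ≤ β * ρ + r * √(∑ i, excessSq β (g i)) := by
  have hsplit : ∀ i, g i * t i ≤ β * |t i| + max (|g i| - β) 0 * |t i| := fun i =>
    calc g i * t i ≤ |g i| * |t i| := by rw [← abs_mul]; exact le_abs_self _
      _ ≤ (β + max (|g i| - β) 0) * |t i| := by gcongr; linarith [le_max_left (|g i| - β) 0]
      _ = β * |t i| + max (|g i| - β) 0 * |t i| := by ring
  have hcs : ∑ i, max (|g i| - β) 0 * |t i| ≤ √(∑ i, excessSq β (g i)) * eNorm2 t := by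
    simpa only [excessSq, eNorm2, sq_abs] using
      sum_mul_le_sqrt_mul_sqrt Finset.univ (fun i => max (|g i| - β) 0) (fun i => |t i|)
  calc dotp g t ≤ β * norm1 t + ∑ i, max (|g i| - β) 0 * |t i| := by
        rw [dotp, norm1, Finset.mul_sum, ← Finset.sum_add_distrib]
        exact Finset.sum_le_sum fun i _ => hsplit i
    _ ≤ β * ρ + √(∑ i, excessSq β (g i)) * r := by
        gcongr
        exact hcs.trans (by gcongr)
    _ = β * ρ + r * √(∑ i, excessSq β (g i)) := by ring

lemma gaussWidth_le_integral {d : ℕ} {T : Set (Fin d → ℝ)} {F : (Fin d → ℝ) → ℝ}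
    (h₀ : 0 ∈ T) (hF : ∀ g, ∀ t ∈ T, dotp g t ≤ F g)
    (hFi : Integrable F (Measure.pi fun _ : Fin d => gaussianReal 0 1)) :
    gaussWidth d T ≤ ∫ g, F g ∂(Measure.pi fun _ : Fin d => gaussianReal 0 1) := by
  have hF₀ : ∀ g, 0 ≤ F g := fun g => by simpa [dotp] using hF g 0 h₀
  have hinner : ∀ g t, ⨆ _ : t ∈ T, dotp g t ≤ F g := fun g t =>
    Real.iSup_le (hF g t) (hF₀ g)
  refine integral_mono_of_nonneg (ae_of_all _ fun g => ?_) hFi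
    (ae_of_all _ fun g => Real.iSup_le (hinner g) (hF₀ g))
  calc (0 : ℝ) = ⨆ _ : (0 : Fin d → ℝ) ∈ T, dotp g 0 := by simp [dotp, h₀]
    _ ≤ ⨆ t ∈ T, dotp g t :=
      le_ciSup (f := fun t => ⨆ _ : t ∈ T, dotp g t)
        ⟨F g, by rintro _ ⟨t, rfl⟩; exact hinner g t⟩ 0

lemma gaussWidth_inter_balls_le {d : ℕ} {β ρ r : ℝ} (hβ : 1 ≤ β) (hρ : 0 ≤ ρ) (hr : 0 ≤ r) :
    gaussWidth d {t | norm1 t ≤ ρ ∧ eNorm2 t ≤ r} ≤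
      β * ρ + r * √(24 * d * exp (-β ^ 2 / 4)) := by
  set μ := Measure.pi fun _ : Fin d => gaussianReal 0 1
  have hq := integrable_excessSq_gaussianReal hβ
  have hX : Integrable (fun g : Fin d → ℝ => ∑ i, excessSq β (g i)) μ :=
    integrable_finsetSum _ fun i _ => integrable_comp_eval hq
  have hX₀ : ∀ g : Fin d → ℝ, 0 ≤ ∑ i, excessSq β (g i) := fun g =>
    Finset.sum_nonneg fun i _ => excessSq_nonneg β (g i)
  have hsqrtX := (integrable_sqrt_of_nonneg hX₀ hX).const_mul r
  have hXint : ∫ g, ∑ i, excessSq β (g i) ∂μ ≤ 24 * d * exp (-β ^ 2 / 4) := by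
    rw [integral_finsetSum _ fun i _ => integrable_comp_eval hq]
    simp only [integral_comp_eval (μ := fun _ : Fin d => gaussianReal 0 1) hq.1,
      Finset.sum_const, Finset.card_univ, Fintype.card_fin, nsmul_eq_mul]
    nlinarith [integral_excessSq_gaussianReal_le hβ, (d.cast_nonneg : (0 : ℝ) ≤ d)]
  have h₀ : (0 : Fin d → ℝ) ∈ {t | norm1 t ≤ ρ ∧ eNorm2 t ≤ r} := by simp [norm1, eNorm2, hρ, hr]
  calc gaussWidth d {t | norm1 t ≤ ρ ∧ eNorm2 t ≤ r}
      ≤ ∫ g, β * ρ + r * √(∑ i, excessSq β (g i)) ∂μ :=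
        gaussWidth_le_integral h₀ (fun g t ht => dotp_le_excessSq (by linarith) g ht.1 ht.2)
          ((integrable_const _).add hsqrtX)
    _ = β * ρ + r * ∫ g, √(∑ i, excessSq β (g i)) ∂μ := by
        rw [integral_add (integrable_const _) hsqrtX, integral_const, integral_const_mul]
        simp
    _ ≤ β * ρ + r * √(24 * d * exp (-β ^ 2 / 4)) := by
        gcongr
        exact (integral_sqrt_le_sqrt_integral hX₀ hX).trans (sqrt_le_sqrt hXint)

lemma gaussWidth_inter_balls_le_five_mul {d : ℕ} {ρ r : ℝ} (hρ : 0 < ρ) (hr : 0 < r)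
    (hρd : ρ ^ 2 ≤ d * r ^ 2) :
    gaussWidth d {t | norm1 t ≤ ρ ∧ eNorm2 t ≤ r} ≤
      5 * ρ * √(log (exp 1 * d * r ^ 2 / ρ ^ 2)) := by
  have hd : (0 : ℝ) < d := by
    by_contra! h
    nlinarith [mul_nonpos_of_nonpos_of_nonneg h (sq_nonneg r)]
  set L := log (exp 1 * d * r ^ 2 / ρ ^ 2) with hL
  have hL₁ : 1 ≤ L := by
    rw [hL, le_log_iff_exp_le (by positivity), le_div_iff₀ (by positivity)]
    nlinarith [exp_pos 1]
  have hsqrtL : 1 ≤ √L := one_le_sqrt.mpr hL₁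
  have htail : exp (-(2 * √L) ^ 2 / 4) = ρ ^ 2 / (exp 1 * d * r ^ 2) := by
    rw [mul_pow, sq_sqrt (by linarith), show -(2 ^ 2 * L) / 4 = -L by ring, exp_neg, hL,
      exp_log (by positivity), inv_div]
  have hsum : 24 * d * exp (-(2 * √L) ^ 2 / 4) ≤ (3 * ρ / r) ^ 2 := by
    rw [htail, div_pow, le_div_iff₀ (by positivity), mul_div_assoc', div_mul_eq_mul_div,
      div_le_iff₀ (by positivity)]
    nlinarith [exp_one_gt_d9, mul_pos (mul_pos hd (pow_pos hρ 2)) (pow_pos hr 2)]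
  calc gaussWidth d {t | norm1 t ≤ ρ ∧ eNorm2 t ≤ r}
      ≤ 2 * √L * ρ + r * √(24 * d * exp (-(2 * √L) ^ 2 / 4)) :=
        gaussWidth_inter_balls_le (by linarith) hρ.le hr.le
    _ ≤ 2 * √L * ρ + r * (3 * ρ / r) := by
        gcongr
        exact sqrt_le_left (by positivity) |>.mpr hsum
    _ ≤ 5 * ρ * √L := by
        rw [mul_div_cancel₀ _ hr.ne']
        nlinarith

end GaussWidth

open GaussWidth

/-- `ℓ*(√k B₁^d ∩ B₂^d) ≤ C √(k log(ed/k))`, and consequently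
`ℓ*(ρ B₁^d ∩ r B₂^d) ≤ C ρ √(log(e d r²/ρ²))` whenever `r ≤ ρ ≤ √d r`. -/
theorem statement11 :
    ∃ C : ℝ, 0 < C ∧
      (∀ d k : ℕ, 1 ≤ k → k ≤ d →
        gaussWidth d {t | norm1 t ≤ Real.sqrt k ∧ eNorm2 t ≤ 1} ≤
          C * Real.sqrt (k * Real.log (Real.exp 1 * d / k))) ∧
      (∀ (d : ℕ) (ρ r : ℝ), 0 < r → r ≤ ρ → ρ ≤ Real.sqrt d * r →
        gaussWidth d {t | norm1 t ≤ ρ ∧ eNorm2 t ≤ r} ≤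
          C * ρ * Real.sqrt (Real.log (Real.exp 1 * d * r ^ 2 / ρ ^ 2))) := by
  refine ⟨5, by norm_num, fun d k hk hkd => ?_, fun d ρ r hr hrρ hρd => ?_⟩
  · have hk₀ : (0 : ℝ) < k := by exact_mod_cast hk
    have h := gaussWidth_inter_balls_le_five_mul (d := d) (Real.sqrt_pos.mpr hk₀) one_pos
      (by rw [Real.sq_sqrt hk₀.le, one_pow, mul_one]; exact_mod_cast hkd)
    rwa [Real.sq_sqrt hk₀.le, one_pow, mul_one, mul_assoc, ← Real.sqrt_mul hk₀.le] at h
  · refine gaussWidth_inter_balls_le_five_mul (hr.trans_le hrρ) hr ?_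
    calc ρ ^ 2 ≤ (Real.sqrt d * r) ^ 2 := by gcongr; linarith
      _ = d * r ^ 2 := by rw [mul_pow, Real.sq_sqrt d.cast_nonneg]

end
end
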